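/- arXiv:1910.04182 — 4 statements merged into one kernel-verified Lean document; each statement's English description precedes it below -/
import Mathlib

section
/- For every i = 1,…,n, the operator T_i on ℚFl(V) satisfies the quadratic Hecke relation T_i² = (q−1)·T_i + q·id. -/
/-!
Let `q` be a prime power and `F = 𝔽_q` the field with `q` elements (formalized as an
arbitrary finite field `F` with `Fintype.card F = q`), `n ≥ 1`, `V = F^(n+1)`.
`CompleteFlag F n` is the set of complete flags `0 = V₀ ⊂ V₁ ⊂ ⋯ ⊂ V_{n+1} = V`
with `dim Vᵢ = i`.  `T i` is the linear operator on the ℚ-vector space of functions on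
flags (with the flags as the standard basis) sending a flag to the sum of all flags
differing from it exactly at position `i`.

STATEMENT 0: for every `i = 1, …, n` the quadratic Hecke relation
`T i ∘ T i = (q - 1) • T i + q • id` holds.
-/

/-- A complete flag `0 = V₀ ⊂ V₁ ⊂ ⋯ ⊂ V_{n+1} = V` of subspaces of `V = F^(n+1)`,
with `dim Vᵢ = i`. -/
structure CompleteFlag (F : Type) [Field F] (n : ℕ) where
  toFun : Fin (n + 2) → Submodule F (Fin (n + 1) → F)
  mono : Monotone toFun
  rank : ∀ i : Fin (n + 2), Module.finrank F (toFun i) = (i : ℕ)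

instance (F : Type) [Field F] [Fintype F] (n : ℕ) : Finite (CompleteFlag F n) := by
  have : Finite (Submodule F (Fin (n + 1) → F)) :=
    Finite.of_injective (fun s => (s : Set (Fin (n + 1) → F))) SetLike.coe_injective
  exact Finite.of_injective (fun W => W.toFun)
    (fun W W' h => by cases W; cases W'; simpa using h)

noncomputable instance (F : Type) [Field F] [Fintype F] (n : ℕ) :
    Fintype (CompleteFlag F n) := Fintype.ofFinite _

open Classical in
/-- The operator `Tᵢ` on `ℚ Fl(V)`: it sends a flag `(V_j)_j` to the sum of all flags
`(V_j')_j` with `V_j' = V_j` for `j ≠ i` and `V_i' ≠ V_i`. -/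
noncomputable def T (F : Type) [Field F] [Fintype F] (n : ℕ) (i : Fin (n + 2)) :
    (CompleteFlag F n → ℚ) →ₗ[ℚ] (CompleteFlag F n → ℚ) where
  toFun f := fun W => ∑ V : CompleteFlag F n,
    if (∀ j, j ≠ i → V.toFun j = W.toFun j) ∧ V.toFun i ≠ W.toFun i then f V else 0
  map_add' f g := by
    funext W
    show _ = (∑ V : CompleteFlag F n, (_ : ℚ)) + (∑ V : CompleteFlag F n, (_ : ℚ))
    rw [← Finset.sum_add_distrib]
    refine Finset.sum_congr rfl fun V _ => ?_
    split <;> simp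
  map_smul' c f := by
    funext W
    show _ = c • ∑ V : CompleteFlag F n, (_ : ℚ)
    simp only [smul_eq_mul, Finset.mul_sum]
    refine Finset.sum_congr rfl fun V _ => ?_
    split <;> simp


/-!
Flags agreeing off position `i` form the classes of an equivalence relation, and `Tᵢ = E - 1`
where `(E f) W` sums `f` over the class of `W`. Since `E f` is constant on classes, `E² = c E`
for the common class size `c`, whence `(E - 1)² = (c - 2)(E - 1) + (c - 1)`. Changing a flag
only at `i` means choosing a subspace strictly between `V_{i-1}` and `V_{i+1}`; these correspond
to the lines of a plane complementary to `V_{i-1}` in `V_{i+1}`, so `c = q + 1`.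
-/

open Module Finset

namespace Setoid

variable {α : Type*} [Fintype α] {R : Type*}

section CommSemiring

variable (R) [CommSemiring R] (r : Setoid α)

open Classical in
noncomputable def classSum : (α → R) →ₗ[R] (α → R) where
  toFun f W := ∑ V with r V W, f V
  map_add' f g := by ext W; simp [sum_add_distrib]
  map_smul' c f := by ext W; simp [mul_sum]

open Classical in
lemma classSum_apply (f : α → R) (W : α) : classSum R r f W = ∑ V with r V W, f V := rfl

variable {R r}

lemma classSum_apply_eq_of_rel (f : α → R) {V W : α} (h : r V W) :
    classSum R r f V = classSum R r f W := by
  classical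
  simp only [classSum_apply]
  congr 1
  ext U
  simp only [mem_filter, mem_univ, true_and]
  exact ⟨fun hU => r.trans hU h, fun hU => r.trans hU (r.symm h)⟩

lemma classSum_comp_classSum {c : ℕ} (hc : ∀ W, Nat.card {V // r V W} = c) :
    classSum R r ∘ₗ classSum R r = (c : R) • classSum R r := by
  classical
  refine LinearMap.ext fun f => funext fun W => ?_
  rw [LinearMap.comp_apply, LinearMap.smul_apply, Pi.smul_apply, classSum_apply,
    sum_congr rfl fun V hV => classSum_apply_eq_of_rel f (mem_filter.1 hV).2, sum_const,
    ← Fintype.card_subtype, ← Nat.card_eq_fintype_card, hc, nsmul_eq_mul, smul_eq_mul]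

end CommSemiring

lemma classSum_sub_id_comp_self [CommRing R] {r : Setoid α} {q : ℕ}
    (hq : ∀ W, Nat.card {V // r V W} = q + 1) :
    (classSum R r - LinearMap.id) ∘ₗ (classSum R r - LinearMap.id)
      = ((q : R) - 1) • (classSum R r - LinearMap.id) + (q : R) • LinearMap.id := by
  have hE := classSum_comp_classSum (R := R) hq
  rw [← Module.End.mul_eq_comp] at hE ⊢
  rw [← Module.End.one_eq_id, sub_mul, mul_sub, mul_sub, hE, mul_one, one_mul, mul_one]
  push_cast
  module

end Setoid

namespace Submodule

variable {K M : Type*} [Field K] [AddCommGroup M] [Module K M] [FiniteDimensional K M]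

lemma finrank_sup_of_disjoint {A C : Submodule K M} (h : Disjoint A C) :
    finrank K ↥(A ⊔ C) = finrank K A + finrank K C := by
  rw [← finrank_sup_add_finrank_inf_eq, h.eq_bot, finrank_bot, add_zero]

def intermediateEquivLines {A C : Submodule K M} (h : Disjoint A C) :
    {X : Submodule K M // A ≤ X ∧ X ≤ A ⊔ C ∧ finrank K X = finrank K A + 1}
      ≃ {H : Submodule K M // H ≤ C ∧ finrank K H = 1} :=
  have sup_inf_eq : ∀ {X : Submodule K M}, A ≤ X → X ≤ A ⊔ C → A ⊔ C ⊓ X = X :=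
    fun hAX hXB => (sup_inf_assoc_of_le C hAX).symm.trans (inf_eq_right.2 hXB)
  { toFun X := ⟨C ⊓ X, inf_le_left, by
      have := finrank_sup_of_disjoint (h.mono_right (inf_le_left : C ⊓ X.1 ≤ C))
      rw [sup_inf_eq X.2.1 X.2.2.1, X.2.2.2] at this
      omega⟩
    invFun H := ⟨A ⊔ H, le_sup_left, sup_le_sup_left H.2.1 A, by
      rw [finrank_sup_of_disjoint (h.mono_right H.2.1), H.2.2]⟩
    left_inv X := Subtype.ext (sup_inf_eq X.2.1 X.2.2.1)
    right_inv H := Subtype.ext <| by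
      simp only
      rw [inf_comm, sup_comm, sup_inf_assoc_of_le A H.2.1, h.eq_bot, sup_bot_eq] }

def linesLeEquiv (C : Submodule K M) :
    {H : Submodule K M // H ≤ C ∧ finrank K H = 1} ≃ {H : Submodule K C // finrank K H = 1} :=
  (Equiv.subtypeSubtypeEquivSubtypeInter (· ≤ C) (finrank K · = 1)).symm.trans
    ((MapSubtype.orderIso C).toEquiv.subtypeEquiv fun H => by
      show _ ↔ finrank K ↥(H.map C.subtype) = 1
      rw [finrank_map_subtype_eq]).symm

lemma natCard_intermediate_of_finrank_add_two [Finite K] {A B : Submodule K M} (hAB : A ≤ B)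
    (hB : finrank K B = finrank K A + 2) :
    Nat.card {X : Submodule K M // A ≤ X ∧ X ≤ B ∧ finrank K X = finrank K A + 1}
      = Nat.card K + 1 := by
  obtain ⟨C', hC'⟩ := A.exists_isCompl
  have hdisj : Disjoint A (C' ⊓ B) := hC'.disjoint.mono_right inf_le_left
  have hsup : A ⊔ C' ⊓ B = B := by rw [← sup_inf_assoc_of_le C' hAB, hC'.sup_eq_top, top_inf_eq]
  have hrank : finrank K ↥(C' ⊓ B) = 2 := by
    have := finrank_sup_of_disjoint hdisj
    rw [hsup] at this
    omega
  rw [← hsup, Nat.card_congr ((intermediateEquivLines hdisj).trans (linesLeEquiv _)),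
    ← Nat.card_congr (Projectivization.equivSubmodule K _),
    Projectivization.card_of_finrank_two K _ hrank]

end Submodule

lemma Monotone.update {ι α : Type*} [PartialOrder ι] [Preorder α] [DecidableEq ι] {f : ι → α}
    (hf : Monotone f) {i : ι} {x : α} (hlt : ∀ j < i, f j ≤ x) (hgt : ∀ j, i < j → x ≤ f j) :
    Monotone (Function.update f i x) := by
  intro a b hab
  rcases eq_or_ne a i with rfl | ha <;> rcases eq_or_ne b a with rfl | hb
  · exact le_rfl
  · rw [Function.update_self, Function.update_of_ne hb]
    exact hgt b (lt_of_le_of_ne hab hb.symm)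
  · exact le_rfl
  · rcases eq_or_ne b i with rfl | hbi
    · rw [Function.update_self, Function.update_of_ne ha]
      exact hlt a (lt_of_le_of_ne hab ha)
    · rw [Function.update_of_ne ha, Function.update_of_ne hbi]
      exact hf hab

namespace CompleteFlag

variable {F : Type} [Field F] {n : ℕ}

lemma toFun_injective : Function.Injective (toFun : CompleteFlag F n → _) := by
  rintro ⟨_, _, _⟩ ⟨_, _, _⟩ rfl
  rfl

def agreeOff (i : Fin (n + 2)) : Setoid (CompleteFlag F n) where
  r V W := ∀ j, j ≠ i → V.toFun j = W.toFun j
  iseqv := ⟨fun _ _ _ => rfl, fun h j hj => (h j hj).symm,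
    fun h h' j hj => (h j hj).trans (h' j hj)⟩

lemma eq_of_agreeOff {i : Fin (n + 2)} {V W : CompleteFlag F n} (h : agreeOff i V W)
    (hi : V.toFun i = W.toFun i) : V = W :=
  toFun_injective <| funext fun j => by
    rcases eq_or_ne j i with rfl | hj
    exacts [hi, h j hj]

def update (W : CompleteFlag F n) (i : Fin (n + 2)) (X : Submodule F (Fin (n + 1) → F))
    (hlt : ∀ j < i, W.toFun j ≤ X) (hgt : ∀ j, i < j → X ≤ W.toFun j)
    (hX : finrank F X = i) : CompleteFlag F n where
  toFun := Function.update W.toFun i X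
  mono := W.mono.update hlt hgt
  rank j := by
    rcases eq_or_ne j i with rfl | hj
    · rw [Function.update_self, hX]
    · rw [Function.update_of_ne hj, W.rank]

def agreeOffEquiv (W : CompleteFlag F n) {a i b : Fin (n + 2)}
    (ha : (a : ℕ) + 1 = i) (hb : (i : ℕ) + 1 = b) :
    {V // agreeOff i V W} ≃ {X : Submodule F (Fin (n + 1) → F) //
      W.toFun a ≤ X ∧ X ≤ W.toFun b ∧ finrank F X = finrank F (W.toFun a) + 1} where
  toFun V := ⟨V.1.toFun i,
    V.2 a (by omega) ▸ V.1.mono (by omega),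
    V.2 b (by omega) ▸ V.1.mono (by omega),
    by rw [V.1.rank, W.rank]; omega⟩
  invFun X := ⟨W.update i X.1 (fun j hj => (W.mono (by omega)).trans X.2.1)
      (fun j hj => X.2.2.1.trans (W.mono (by omega))) (by rw [X.2.2.2, W.rank]; omega),
    fun j hj => Function.update_of_ne hj _ _⟩
  left_inv V := Subtype.ext <| eq_of_agreeOff
    (fun j hj => (Function.update_of_ne hj _ _).trans (V.2 j hj).symm) (Function.update_self ..)
  right_inv X := Subtype.ext (Function.update_self ..)

lemma natCard_agreeOff [Fintype F] (W : CompleteFlag F n) {i : Fin (n + 2)} (hi1 : 1 ≤ (i : ℕ))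
    (hi2 : (i : ℕ) ≤ n) : Nat.card {V // agreeOff i V W} = Fintype.card F + 1 := by
  rw [Nat.card_congr (W.agreeOffEquiv (a := ⟨i - 1, by omega⟩) (b := ⟨i + 1, by omega⟩)
      (by simp only; omega) rfl),
    Submodule.natCard_intermediate_of_finrank_add_two (W.mono (by simp only [Fin.mk_le_mk]; omega))
      (by simp only [W.rank]; omega),
    Nat.card_eq_fintype_card]

end CompleteFlag

lemma T_eq_classSum_sub_id (F : Type) [Field F] [Fintype F] (n : ℕ) (i : Fin (n + 2)) :
    T F n i = (CompleteFlag.agreeOff i).classSum ℚ - LinearMap.id := by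
  classical
  refine LinearMap.ext fun f => funext fun W => ?_
  have hfilter : ({V | CompleteFlag.agreeOff i V W ∧ V.toFun i ≠ W.toFun i} : Finset _)
      = ({V | CompleteFlag.agreeOff i V W} : Finset _).erase W := by
    ext V
    simp only [mem_filter, mem_univ, true_and, mem_erase]
    exact ⟨fun h => ⟨fun hVW => h.2 (hVW ▸ rfl), h.1⟩,
      fun h => ⟨h.2, fun hi => h.1 (CompleteFlag.eq_of_agreeOff h.2 hi)⟩⟩
  rw [LinearMap.sub_apply, Pi.sub_apply, Setoid.classSum_apply, LinearMap.id_apply,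
    ← sum_erase_eq_sub (mem_filter.2 ⟨mem_univ W, fun _ _ => rfl⟩),
    ← hfilter, sum_filter]
  simp only [T, LinearMap.coe_mk, AddHom.coe_mk]
  -- the two sides differ only in their `Decidable` instances
  congr!

theorem hecke_quadratic_relation_general (F : Type) [Field F] [Fintype F] (n : ℕ)
    (i : Fin (n + 2)) (hi1 : 1 ≤ (i : ℕ)) (hi2 : (i : ℕ) ≤ n) :
    (T F n i) ∘ₗ (T F n i)
      = ((Fintype.card F : ℚ) - 1) • T F n i
        + (Fintype.card F : ℚ) • (LinearMap.id : (CompleteFlag F n → ℚ) →ₗ[ℚ] _) := by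
  rw [T_eq_classSum_sub_id]
  exact Setoid.classSum_sub_id_comp_self fun W => W.natCard_agreeOff hi1 hi2

/-- For `i = 1, …, n`, the operator `Tᵢ` satisfies the quadratic
Hecke relation `Tᵢ² = (q − 1)·Tᵢ + q·id`, where `q = |F|`. -/
theorem hecke_quadratic_relation (F : Type) [Field F] [Fintype F] (n : ℕ) (hn : 1 ≤ n)
    (i : Fin (n + 2)) (hi1 : 1 ≤ (i : ℕ)) (hi2 : (i : ℕ) ≤ n) :
    (T F n i) ∘ₗ (T F n i)
      = ((Fintype.card F : ℚ) - 1) • T F n i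
        + (Fintype.card F : ℚ) • (LinearMap.id : (CompleteFlag F n → ℚ) →ₗ[ℚ] _) :=
  hecke_quadratic_relation_general F n i hi1 hi2
end

section
/- Let V be a flagged graded space over a field k of dimension n. Then the assignment (D,δ) ↦ d(D,δ) induces a bijection between the set of partial rulings of the associated graded ordered set X_V and the set of flag-decreasing differentials on V modulo conjugation by grading- and flag-preserving automorphisms of V; in particular the conjugation class of d(D,δ) is independent of the choice of homogeneous basis adapted to the flag. -/
/-- A flagged graded space over `k`: a finite-dimensional ℤ-graded `k`-vector space
together with a complete flag of graded subspaces. -/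
structure GFS (k : Type) [Field k] : Type 1 where
  V : Type
  [acg : AddCommGroup V]
  [mod : Module k V]
  [fd : FiniteDimensional k V]
  /-- the grading -/
  gr : ℤ → Submodule k V
  /-- the graded pieces decompose `V` as an internal direct sum -/
  internal : DirectSum.IsInternal gr
  /-- the complete flag, `flag i = F_iV` (constant equal to `V` for `i ≥ dim V`) -/
  flag : ℕ → Submodule k V
  flag_mono : Monotone flag
  flag_rank : ∀ i, i ≤ Module.finrank k V → Module.finrank k (flag i) = i
  flag_top : ∀ i, Module.finrank k V ≤ i → flag i = ⊤
  /-- each flag subspace is a graded subspace -/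
  flag_graded : ∀ i, flag i = ⨆ d : ℤ, flag i ⊓ gr d

attribute [instance] GFS.acg GFS.mod GFS.fd

namespace GFS

variable {k : Type} [Field k]

/-- `φ` is homogeneous of degree `r`. -/
def degLE (A B : GFS k) (r : ℤ) (φ : A.V →ₗ[k] B.V) : Prop :=
  ∀ d : ℤ, (A.gr d).map φ ≤ B.gr (d + r)

/-- `φ` strictly decreases the flag: `φ(F_iV) ⊆ F_{i−1}V`. -/
def flagDecr (A : GFS k) (φ : A.V →ₗ[k] A.V) : Prop :=
  ∀ i : ℕ, (A.flag i).map φ ≤ A.flag (i - 1)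

/-- `dd` is a flag-decreasing differential on `A`: degree `1`, squares to zero, and
strictly decreases the flag. -/
def IsDiff (A : GFS k) (dd : A.V →ₗ[k] A.V) : Prop :=
  degLE A A 1 dd ∧ dd ∘ₗ dd = 0 ∧ flagDecr A dd

/-- `f : (A, dA) → (B, dB)` is a quasi-isomorphism: a degree-0 chain map inducing an
isomorphism on cohomology. -/
def IsQis (A B : GFS k) (dA : A.V →ₗ[k] A.V) (dB : B.V →ₗ[k] B.V)
    (f : A.V →ₗ[k] B.V) : Prop :=
  f ∘ₗ dA = dB ∘ₗ f ∧ degLE A B 0 f ∧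
    (∀ b : B.V, dB b = 0 → ∃ a : A.V, dA a = 0 ∧ ∃ c, b - f a = dB c) ∧
    (∀ a : A.V, dA a = 0 → (∃ c, f a = dB c) → ∃ e, a = dA e)

/-- A Hom-triple `(d_A, f, d_B)` from `A` to `B`, as raw data. -/
def IsTriple (A B : GFS k)
    (t : (A.V →ₗ[k] A.V) × (A.V →ₗ[k] B.V) × (B.V →ₗ[k] B.V)) : Prop :=
  IsDiff A t.1 ∧ IsDiff B t.2.2 ∧ IsQis A B t.1 t.2.2 t.2.1

/-- a grading-preserving automorphism -/
def presGr (A : GFS k) (g : A.V ≃ₗ[k] A.V) : Prop :=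
  ∀ d : ℤ, (A.gr d).map (g : A.V →ₗ[k] A.V) = A.gr d

/-- a flag-preserving automorphism -/
def presFlag (A : GFS k) (g : A.V ≃ₗ[k] A.V) : Prop :=
  ∀ i : ℕ, (A.flag i).map (g : A.V →ₗ[k] A.V) = A.flag i

/-- Equivalence of Hom-triples: grading- and flag-preserving automorphisms `φ, ψ`
intertwining the differentials, with `ψ∘f` chain homotopic to `f′∘φ`. -/
def TEquiv (A B : GFS k)
    (t t' : (A.V →ₗ[k] A.V) × (A.V →ₗ[k] B.V) × (B.V →ₗ[k] B.V)) : Prop :=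
  ∃ (φ : A.V ≃ₗ[k] A.V) (ψ : B.V ≃ₗ[k] B.V),
    presGr A φ ∧ presFlag A φ ∧ presGr B ψ ∧ presFlag B ψ ∧
    (φ : A.V →ₗ[k] A.V) ∘ₗ t.1 = t'.1 ∘ₗ (φ : A.V →ₗ[k] A.V) ∧
    (ψ : B.V →ₗ[k] B.V) ∘ₗ t.2.2 = t'.2.2 ∘ₗ (ψ : B.V →ₗ[k] B.V) ∧
    ∃ h : A.V →ₗ[k] B.V, degLE A B (-1) h ∧
      (ψ : B.V →ₗ[k] B.V) ∘ₗ t.2.1 - t'.2.1 ∘ₗ (φ : A.V →ₗ[k] A.V)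
        = t'.2.2 ∘ₗ h + h ∘ₗ t.1

end GFS

namespace GFS

variable {k : Type} [Field k]

/-- `(D, δ)` is a partial ruling of the graded ordered set `(Fin n, deg)`
(`δ` is a total function, constrained only on `D`). -/
def IsPR (n : ℕ) (deg : Fin n → ℤ) (D : Finset (Fin n)) (δ : Fin n → Fin n) : Prop :=
  (∀ x ∈ D, δ x ∉ D) ∧ (∀ x ∈ D, ∀ y ∈ D, δ x = δ y → x = y) ∧
    (∀ x ∈ D, δ x < x ∧ deg (δ x) = deg x + 1)

/-- The differential `d(D,δ)` determined by a partial ruling and a homogeneous basis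
adapted to the flag: `d (b x) = b (δ x)` for `x ∈ D` and `d (b x) = 0` otherwise. -/
noncomputable def dOf {A : GFS k} {n : ℕ} (b : Module.Basis (Fin n) k A.V)
    (D : Finset (Fin n)) (δ : Fin n → Fin n) : A.V →ₗ[k] A.V :=
  b.constr k (fun x => if x ∈ D then b (δ x) else 0)

/-- `d` and `d'` are conjugate by a grading- and flag-preserving automorphism of `A`. -/
def ConjDiff (A : GFS k) (d d' : A.V →ₗ[k] A.V) : Prop :=
  ∃ g : A.V ≃ₗ[k] A.V, presGr A g ∧ presFlag A g ∧
    (g : A.V →ₗ[k] A.V) ∘ₗ d = d' ∘ₗ (g : A.V →ₗ[k] A.V)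

end GFS

open GFS

/-!
Conjugation by a grading- and flag-preserving automorphism preserves the ranks of
`d(F_i) + F_j`. For `d(D,δ)` this rank is `dim F_j + #{x ∈ D | x < i, j ≤ δ x}`, and these
counts determine `(D, δ)`.

Conversely, a flag-decreasing differential `d` is brought to the form `d(D,δ)` by Gaussian
elimination along the flag, processing an adapted homogeneous basis `C` in increasing order.
When `C x` is reached, write `d (C x) = ∑ a_z C z` with `z < x`. Since `d² = 0` and `d` maps the
already paired sources `C y`, `y ∈ D`, to distinct basis vectors, `a_y = 0` for `y ∈ D`;
replacing `C x` by `C x - ∑_{y ∈ D} a_{δ y} C y` also removes the components along the targets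
`C (δ y)`. If `d (C x)` is now nonzero, its leading index `z₀` is unpaired: set `δ x := z₀` and
replace `C z₀` by `d (C x)`. These changes are triangular and homogeneous, so `C` stays an
adapted homogeneous basis.

Two adapted homogeneous bases have the same degrees, so the automorphism carrying one to the
other preserves grading and flag and conjugates the corresponding `d(D,δ)`.
-/

open Submodule Module

open Finset in
theorem Fin.iff_of_card_filter_lt_eq {n : ℕ} {P Q : Fin n → Prop} [DecidablePred P]
    [DecidablePred Q]
    (h : ∀ i : ℕ, #{x : Fin n | (x : ℕ) < i ∧ P x} = #{x : Fin n | (x : ℕ) < i ∧ Q x})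
    (x : Fin n) : P x ↔ Q x := by
  have hsucc (R : Fin n → Prop) [DecidablePred R] : #{y : Fin n | (y : ℕ) < x + 1 ∧ R y}
      = #{y : Fin n | (y : ℕ) < x ∧ R y} + if R x then 1 else 0 := by
    simp only [card_filter]
    rw [← Fintype.sum_ite_eq' x (fun y => if R y then 1 else 0), ← sum_add_distrib]
    refine sum_congr rfl fun y _ => ?_
    split_ifs <;> grind [Fin.ext_iff]
  have h1 := h (x + 1)
  rw [hsucc P, hsucc Q, h x] at h1
  split_ifs at h1 <;> first | omega | tauto

namespace Module.Basis

variable {ι k V : Type*} [Field k] [AddCommGroup V] [Module k V] (C : Basis ι k V)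

theorem finrank_span_image_finset (S : Finset ι) : finrank k (span k (C '' S)) = S.card := by
  classical
  rw [← Finset.coe_image, finrank_span_finset_eq_card,
    Finset.card_image_of_injective _ C.injective]
  rw [Finset.coe_image]
  exact (C.linearIndependent.linearIndepOn _).id_image

theorem map_equiv_span_image (C' : Basis ι k V) (S : Set ι) :
    (span k (C '' S)).map (C.equiv C' (Equiv.refl ι) : V →ₗ[k] V) = span k (C' '' S) := by
  rw [map_span, ← Set.image_comp]
  exact congrArg _ (Set.image_congr fun z _ => by simp [Basis.equiv_apply])

theorem repr_sum_smul_comp_apply_self {D : Finset ι} {δ : ι → ι} (hδ : Set.InjOn δ D)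
    (f : ι → k) {y : ι} (hy : y ∈ D) : C.repr (∑ z ∈ D, f z • C (δ z)) (δ y) = f y := by
  classical
  simp only [map_sum, map_smul, C.repr_self, Finsupp.finsetSum_apply, Finsupp.smul_apply,
    Finsupp.single_apply, smul_eq_mul, mul_ite, mul_one, mul_zero]
  rw [Finset.sum_eq_single_of_mem y hy fun z hz hzy => if_neg fun h => hzy (hδ hz hy h),
    if_pos rfl]

theorem repr_sum_smul_comp_apply_of_forall_ne {D : Finset ι} {δ : ι → ι} (f : ι → k) {t : ι}
    (ht : ∀ y ∈ D, δ y ≠ t) : C.repr (∑ z ∈ D, f z • C (δ z)) t = 0 := by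
  classical
  simp only [map_sum, map_smul, C.repr_self, Finsupp.finsetSum_apply, Finsupp.smul_apply,
    Finsupp.single_apply, smul_eq_mul, mul_ite, mul_one, mul_zero]
  exact Finset.sum_eq_zero fun z hz => if_neg (ht z hz)

end Module.Basis

namespace GFS

variable {k : Type} [Field k] {A : GFS k} {n : ℕ}

section PartialRuling

variable {deg : Fin n → ℤ} {D : Finset (Fin n)} {δ : Fin n → Fin n}

theorem IsPR.injOn (h : IsPR n deg D δ) : Set.InjOn δ D :=
  fun x hx y hy => h.2.1 x hx y hy

theorem IsPR.insert (h : IsPR n deg D δ) {x y : Fin n} (hx : x ∉ D) (hxδ : ∀ z ∈ D, δ z ≠ x)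
    (hy : y ∉ D) (hyδ : ∀ z ∈ D, δ z ≠ y) (hyx : y < x) (hdeg : deg y = deg x + 1) :
    IsPR n deg (insert x D) (Function.update δ x y) := by
  obtain ⟨h1, h2, h3⟩ := h
  have hne : ∀ z ∈ D, z ≠ x := fun z hz hzx => hx (hzx ▸ hz)
  refine ⟨fun z hz => ?_, fun z hz w hw hzw => ?_, fun z hz => ?_⟩
  · rcases Finset.mem_insert.mp hz with rfl | hz
    · simpa [hy] using hyx.ne
    · simpa [Function.update_of_ne (hne z hz), h1 z hz] using hxδ z hz
  · rcases Finset.mem_insert.mp hz with rfl | hzD <;>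
      rcases Finset.mem_insert.mp hw with rfl | hwD
    · rfl
    · simp [Function.update_of_ne (hne w hwD)] at hzw
      exact absurd hzw.symm (hyδ w hwD)
    · simp [Function.update_of_ne (hne z hzD)] at hzw
      exact absurd hzw (hyδ z hzD)
    · simp only [Function.update_of_ne (hne z hzD), Function.update_of_ne (hne w hwD)] at hzw
      exact h2 z hzD w hwD hzw
  · rcases Finset.mem_insert.mp hz with rfl | hz
    · simpa using ⟨hyx, hdeg⟩
    · simpa [Function.update_of_ne (hne z hz)] using h3 z hz

end PartialRuling

theorem flag_zero : A.flag 0 = ⊥ :=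
  Submodule.finrank_eq_zero.mp (A.flag_rank 0 (Nat.zero_le _))

def IsAdaptedBasis (A : GFS k) (C : Basis (Fin n) k A.V) : Prop :=
  ∀ i : ℕ, A.flag i = span k (C '' {z | (z : ℕ) < i})

namespace IsAdaptedBasis

variable {C : Basis (Fin n) k A.V} (hC : IsAdaptedBasis A C)
include hC

theorem mem_flag_iff {v : A.V} {i : ℕ} :
    v ∈ A.flag i ↔ ∀ z, C.repr v z ≠ 0 → (z : ℕ) < i := by
  simp only [hC i, C.mem_span_image, Set.subset_def, Finset.mem_coe, Finsupp.mem_support_iff,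
    Set.mem_ofPred_eq]

theorem mem_flag_succ (z : Fin n) : C z ∈ A.flag (z + 1) :=
  hC.mem_flag_iff.mpr fun y hy => by
    rw [C.repr_self, Finsupp.single_apply_ne_zero] at hy
    omega

theorem notMem_flag (z : Fin n) : C z ∉ A.flag z := fun h =>
  lt_irrefl _ (hC.mem_flag_iff.mp h z (by simp))

theorem mem_flag_succ_notMem_of_sub_mem {x : Fin n} {u : A.V} (h : u - C x ∈ A.flag x) :
    u ∈ A.flag (x + 1) ∧ u ∉ A.flag x := by
  refine ⟨?_, fun hu => hC.notMem_flag x (by simpa using sub_mem hu h)⟩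
  simpa using add_mem (A.flag_mono (Nat.le_succ _) h) (hC.mem_flag_succ x)

theorem exists_repr_ne_zero_mem_flag_succ_notMem {v : A.V} (hv : v ≠ 0) :
    ∃ z, C.repr v z ≠ 0 ∧ v ∈ A.flag (z + 1) ∧ v ∉ A.flag z := by
  have hs : (C.repr v).support.Nonempty := by simpa using hv
  have hmax := Finsupp.mem_support_iff.mp (Finset.max'_mem _ hs)
  refine ⟨_, hmax, hC.mem_flag_iff.mpr fun y hy => ?_,
    fun h => lt_irrefl _ (hC.mem_flag_iff.mp h _ hmax)⟩
  exact Nat.lt_succ_of_le (Finset.le_max' _ y (Finsupp.mem_support_iff.mpr hy))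

end IsAdaptedBasis

section Triangular

variable {c : Fin n → A.V} (hn : finrank k A.V = n)
  (hc : ∀ z : Fin n, c z ∈ A.flag (z + 1)) (hc' : ∀ z : Fin n, c z ∉ A.flag z)
include hn hc hc'

theorem span_image_lt_eq_flag_of_le : ∀ i ≤ n, span k (c '' {z | (z : ℕ) < i}) = A.flag i
  | 0, _ => by simp [flag_zero]
  | i + 1, hi => by
    set z : Fin n := ⟨i, hi⟩
    have hset : {y : Fin n | (y : ℕ) < i + 1} = insert z {y : Fin n | (y : ℕ) < i} := by
      ext y; simp only [z, Set.mem_insert_iff, Set.mem_ofPred_eq, Fin.ext_iff]; omega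
    rw [hset, Set.image_insert_eq, span_insert, span_image_lt_eq_flag_of_le i (by omega)]
    have hlt : A.flag i < (k ∙ c z) ⊔ A.flag i :=
      lt_of_le_of_ne le_sup_right fun h =>
        hc' z (h ▸ mem_sup_left (mem_span_singleton_self _))
    refine eq_of_le_of_finrank_le (sup_le ?_ (A.flag_mono (Nat.le_succ i))) ?_
    · exact (span_singleton_le_iff_mem _ _).mpr (hc z)
    · have := finrank_lt_finrank_of_lt hlt
      rw [A.flag_rank i (by omega)] at this
      rw [A.flag_rank _ (hn ▸ hi)]
      omega

theorem flag_eq_span_image_lt (i : ℕ) : A.flag i = span k (c '' {z | (z : ℕ) < i}) := by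
  rcases le_or_gt i n with hi | hi
  · exact (span_image_lt_eq_flag_of_le hn hc hc' i hi).symm
  · have hset : {z : Fin n | (z : ℕ) < i} = {z : Fin n | (z : ℕ) < n} := by
      ext z; simp only [Set.mem_ofPred_eq]; omega
    rw [hset, span_image_lt_eq_flag_of_le hn hc hc' n le_rfl, A.flag_top _ (by omega),
      A.flag_top _ hn.le]

noncomputable def triangularBasis : Basis (Fin n) k A.V :=
  basisOfTopLeSpanOfCardEqFinrank c
    (by rw [← Set.image_univ, ← A.flag_top n hn.le, flag_eq_span_image_lt hn hc hc' n]
        exact span_mono (Set.image_mono (Set.subset_univ _)))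
    (by rw [Fintype.card_fin, hn])

@[simp]
theorem coe_triangularBasis : ⇑(triangularBasis hn hc hc') = c :=
  coe_basisOfTopLeSpanOfCardEqFinrank _ _ _

theorem isAdaptedBasis_triangularBasis : IsAdaptedBasis A (triangularBasis hn hc hc') := by
  simpa [IsAdaptedBasis] using flag_eq_span_image_lt hn hc hc'

end Triangular

section Homogeneous

variable {C : Basis (Fin n) k A.V} {deg : Fin n → ℤ} (hC : ∀ z, C z ∈ A.gr (deg z))
include hC

theorem gr_eq_span_image (e : ℤ) : A.gr e = span k (C '' {z | deg z = e}) := by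
  have hle : (fun e => span k (C '' {z | deg z = e})) ≤ A.gr := fun e =>
    span_le.mpr (by rintro - ⟨z, rfl, rfl⟩; exact hC z)
  have htop : ⨆ e, span k (C '' {z | deg z = e}) = ⊤ := by
    rw [iSup_span, ← Set.image_iUnion, Set.iUnion_eq_univ_iff.mpr fun z => ⟨deg z, rfl⟩,
      Set.image_univ, C.span_eq]
  exact (congrFun ((A.internal.submodule_iSupIndep.le_iff_eq_of_iSup_eq_top htop).mp hle) e).symm

theorem mem_gr_iff {v : A.V} {e : ℤ} : v ∈ A.gr e ↔ ∀ z, C.repr v z ≠ 0 → deg z = e := by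
  simp only [gr_eq_span_image hC e, C.mem_span_image, Set.subset_def, Finset.mem_coe,
    Finsupp.mem_support_iff, Set.mem_ofPred_eq]

end Homogeneous

theorem deg_eq_of_isAdaptedBasis {C C' : Basis (Fin n) k A.V} {deg deg' : Fin n → ℤ}
    (hC : ∀ z, C z ∈ A.gr (deg z)) (hCa : IsAdaptedBasis A C)
    (hC' : ∀ z, C' z ∈ A.gr (deg' z)) (hC'a : IsAdaptedBasis A C') (z : Fin n) :
    deg z = deg' z := by
  have hlow := hCa.mem_flag_iff.mp (hC'a.mem_flag_succ z)
  obtain ⟨y, hy, hzy⟩ : ∃ y, C.repr (C' z) y ≠ 0 ∧ (z : ℕ) ≤ y := by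
    simpa [hCa.mem_flag_iff] using hC'a.notMem_flag z
  obtain rfl : y = z := Fin.ext (by have := hlow y hy; omega)
  exact (mem_gr_iff hC).mp (hC' y) y hy

@[simp]
theorem dOf_apply (b : Basis (Fin n) k A.V) (D : Finset (Fin n)) (δ : Fin n → Fin n)
    (x : Fin n) : dOf b D δ (b x) = if x ∈ D then b (δ x) else 0 :=
  b.constr_basis k _ x

theorem dOf_isDiff {b : Basis (Fin n) k A.V} {deg : Fin n → ℤ} (hb : ∀ z, b z ∈ A.gr (deg z))
    (hba : IsAdaptedBasis A b) {D : Finset (Fin n)} {δ : Fin n → Fin n}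
    (hpr : IsPR n deg D δ) : IsDiff A (dOf b D δ) := by
  obtain ⟨hδD, -, hδ⟩ := hpr
  refine ⟨fun e => ?_, b.ext fun x => ?_, fun i => ?_⟩
  · rw [gr_eq_span_image hb e, map_span_le, Set.forall_mem_image]
    rintro z rfl
    rw [dOf_apply]
    split_ifs with hz
    · exact (hδ z hz).2 ▸ hb (δ z)
    · exact zero_mem _
  · by_cases hx : x ∈ D <;> simp [hx, hδD]
  · rw [hba i, map_span_le, Set.forall_mem_image]
    intro z hz
    rw [dOf_apply]
    split_ifs with hzD
    · have : ((δ z : Fin n) : ℕ) + 1 ≤ i - 1 := by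
        have := (hδ z hzD).1
        simp only [Set.mem_ofPred_eq] at hz
        omega
      exact A.flag_mono this (hba.mem_flag_succ _)
    · exact zero_mem _

theorem conjDiff_dOf_of_isAdaptedBasis {b b' : Basis (Fin n) k A.V} {deg deg' : Fin n → ℤ}
    (hb : ∀ z, b z ∈ A.gr (deg z)) (hba : IsAdaptedBasis A b)
    (hb' : ∀ z, b' z ∈ A.gr (deg' z)) (hb'a : IsAdaptedBasis A b')
    (D : Finset (Fin n)) (δ : Fin n → Fin n) :
    ConjDiff A (dOf b D δ) (dOf b' D δ) := by
  obtain rfl : deg = deg' := funext (deg_eq_of_isAdaptedBasis hb hba hb' hb'a)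
  refine ⟨b.equiv b' (Equiv.refl _), fun e => ?_, fun i => ?_, b.ext fun x => ?_⟩
  · conv_lhs => rw [gr_eq_span_image hb e, b.map_equiv_span_image]
    exact (gr_eq_span_image hb' e).symm
  · conv_lhs => rw [hba i, b.map_equiv_span_image]
    exact (hb'a i).symm
  · by_cases hx : x ∈ D <;> simp [hx, Basis.equiv_apply]

theorem finrank_map_flag_sup_flag_eq_of_conjDiff {d d' : A.V →ₗ[k] A.V} (h : ConjDiff A d d')
    (i j : ℕ) :
    finrank k ↥((A.flag i).map d ⊔ A.flag j) = finrank k ↥((A.flag i).map d' ⊔ A.flag j) := by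
  obtain ⟨g, -, hg, hcomm⟩ := h
  have : (A.flag i).map d' ⊔ A.flag j
      = ((A.flag i).map d ⊔ A.flag j).map (g : A.V →ₗ[k] A.V) := by
    rw [Submodule.map_sup, hg j, ← map_comp, hcomm, map_comp, hg i]
  rw [this, LinearEquiv.finrank_map_eq]

open Finset in
theorem finrank_map_flag_sup_flag_dOf {b : Basis (Fin n) k A.V} (hba : IsAdaptedBasis A b)
    {D : Finset (Fin n)} {δ : Fin n → Fin n} (hδ : Set.InjOn δ D) (i j : ℕ) :
    finrank k ↥((A.flag i).map (dOf b D δ) ⊔ A.flag j)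
      = #{z : Fin n | (z : ℕ) < j} + #{x : Fin n | (x : ℕ) < i ∧ x ∈ D ∧ j ≤ δ x} := by
  classical
  set L : Finset (Fin n) := {z : Fin n | (z : ℕ) < j}
  set P : Finset (Fin n) := {x : Fin n | (x : ℕ) < i ∧ x ∈ D ∧ j ≤ δ x}
  have hsup : (A.flag i).map (dOf b D δ) ⊔ A.flag j = span k (b '' ↑(L ∪ P.image δ)) := by
    refine le_antisymm (sup_le ?_ ?_) (span_le.mpr ?_)
    · rw [hba i, map_span_le, Set.forall_mem_image]
      intro x hx
      rw [dOf_apply]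
      split_ifs with hxD
      · refine subset_span ⟨δ x, ?_, rfl⟩
        by_cases hj : j ≤ δ x
        · exact mem_union_right _ (mem_image_of_mem δ (by simp_all [P]))
        · exact mem_union_left _ (by simp [L]; omega)
      · exact zero_mem _
    · rw [hba j]
      exact span_mono (Set.image_mono fun z hz => mem_union_left _ (by simpa [L] using hz))
    · rintro - ⟨t, ht, rfl⟩
      rcases mem_union.mp ht with ht | ht
      · exact mem_sup_right (hba j ▸ subset_span ⟨t, by simpa [L] using ht, rfl⟩)
      · obtain ⟨x, hx, rfl⟩ := mem_image.mp ht
        simp only [P, mem_filter_univ] at hx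
        exact mem_sup_left ⟨b x, hba i ▸ subset_span ⟨x, hx.1, rfl⟩, by simp [hx.2.1]⟩
  have hdisj : Disjoint L (P.image δ) := by
    simp only [disjoint_left, L, P, mem_filter_univ, mem_image]
    rintro - ht ⟨x, ⟨-, -, hx⟩, rfl⟩
    omega
  rw [hsup, b.finrank_span_image_finset, card_union_of_disjoint hdisj,
    card_image_of_injOn (hδ.mono fun x hx => (mem_filter.mp hx).2.2.1)]

theorem eq_of_conjDiff_dOf {b : Basis (Fin n) k A.V} (hba : IsAdaptedBasis A b)
    {D D' : Finset (Fin n)} {δ δ' : Fin n → Fin n} (hδ : Set.InjOn δ D)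
    (hδ' : Set.InjOn δ' D') (h : ConjDiff A (dOf b D δ) (dOf b D' δ')) :
    D = D' ∧ ∀ x ∈ D, δ x = δ' x := by
  have hiff (j : ℕ) (x : Fin n) : x ∈ D ∧ j ≤ δ x ↔ x ∈ D' ∧ j ≤ δ' x := by
    refine Fin.iff_of_card_filter_lt_eq (P := fun x => x ∈ D ∧ j ≤ δ x)
      (Q := fun x => x ∈ D' ∧ j ≤ δ' x) (fun i => ?_) x
    have := finrank_map_flag_sup_flag_eq_of_conjDiff h i j
    rw [finrank_map_flag_sup_flag_dOf hba hδ, finrank_map_flag_sup_flag_dOf hba hδ'] at this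
    omega
  have hD : D = D' := Finset.ext fun x => by simpa using hiff 0 x
  refine ⟨hD, fun x hx => Fin.ext (eq_of_forall_le_iff fun j => ?_)⟩
  simpa [hx, ← hD] using hiff j x

/-- The invariant of the elimination once the first `m` basis vectors have been processed. -/
structure IsPartialNormalForm (d : A.V →ₗ[k] A.V) (deg : Fin n → ℤ) (m : ℕ)
    (C : Basis (Fin n) k A.V) (D : Finset (Fin n)) (δ : Fin n → Fin n) : Prop where
  mem_gr : ∀ z, C z ∈ A.gr (deg z)
  isAdaptedBasis : IsAdaptedBasis A C
  isPR : IsPR n deg D δ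
  lt_of_mem : ∀ z ∈ D, (z : ℕ) < m
  apply_eq : ∀ z : Fin n, (z : ℕ) < m → d (C z) = if z ∈ D then C (δ z) else 0

namespace IsPartialNormalForm

variable {d : A.V →ₗ[k] A.V} {deg : Fin n → ℤ} {m : ℕ} {C : Basis (Fin n) k A.V}
  {D : Finset (Fin n)} {δ : Fin n → Fin n}

theorem zero (hC : ∀ z, C z ∈ A.gr (deg z)) (hCa : IsAdaptedBasis A C) :
    IsPartialNormalForm d deg 0 C ∅ δ :=
  ⟨hC, hCa, by simp [IsPR], by simp, by simp⟩

theorem exists_update (hn : finrank k A.V = n) (hC : ∀ z, C z ∈ A.gr (deg z))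
    (hCa : IsAdaptedBasis A C) {x : Fin n} {v : A.V} (hv : v ∈ A.gr (deg x))
    (hv₁ : v ∈ A.flag (x + 1)) (hv₂ : v ∉ A.flag x) (hpr : IsPR n deg D δ)
    (hlt : ∀ z ∈ D, (z : ℕ) < m)
    (happly : ∀ z : Fin n, (z : ℕ) < m →
      d (Function.update C x v z) = if z ∈ D then Function.update C x v (δ z) else 0) :
    ∃ C', IsPartialNormalForm d deg m C' D δ ∧ ⇑C' = Function.update C x v := by
  have hc := (Function.forall_update_iff C fun z w => w ∈ A.flag ((z : ℕ) + 1)).mpr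
    ⟨hv₁, fun z _ => hCa.mem_flag_succ z⟩
  have hc' := (Function.forall_update_iff C fun z w => w ∉ A.flag z).mpr
    ⟨hv₂, fun z _ => hCa.notMem_flag z⟩
  have hgr := (Function.forall_update_iff C fun z w => w ∈ A.gr (deg z)).mpr
    ⟨hv, fun z _ => hC z⟩
  exact ⟨triangularBasis hn hc hc', ⟨by simpa using hgr, isAdaptedBasis_triangularBasis hn hc hc',
    hpr, hlt, by simpa using happly⟩, by simp⟩

variable (h : IsPartialNormalForm d deg m C D δ)
include h

theorem notMem_of_le {x : Fin n} (hx : m ≤ x) : x ∉ D ∧ ∀ z ∈ D, δ z ≠ x := by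
  refine ⟨fun hxD => ?_, fun z hz hzx => ?_⟩
  · have := h.lt_of_mem x hxD
    omega
  · have := (h.isPR.2.2 z hz).1
    have := h.lt_of_mem z hz
    rw [hzx, Fin.lt_def] at *
    omega

theorem repr_eq_zero_of_mem_flag {v : A.V} (hv : v ∈ A.flag m) (hdv : d v = 0) {y : Fin n}
    (hy : y ∈ D) : C.repr v y = 0 := by
  classical
  have hsum : d v = ∑ z ∈ D, C.repr v z • C (δ z) := by
    conv_lhs => rw [← C.sum_repr v]
    rw [map_sum, ← Finset.univ_inter D, ← Finset.sum_ite_mem]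
    refine Finset.sum_congr rfl fun z _ => ?_
    by_cases hz : C.repr v z = 0
    · simp [hz]
    · rw [map_smul, h.apply_eq z (h.isAdaptedBasis.mem_flag_iff.mp hv z hz)]
      split_ifs <;> simp
  have := C.repr_sum_smul_comp_apply_self h.isPR.injOn (C.repr v) hy
  rwa [← hsum, hdv, map_zero, Finsupp.zero_apply, eq_comm] at this

theorem exists_correction (hd : IsDiff A d) {x : Fin n} (hx : (x : ℕ) = m) :
    ∃ u, u ∈ A.gr (deg x) ∧ u - C x ∈ A.flag x ∧
      d u ∈ span k (C '' {z | (z : ℕ) < m ∧ z ∉ D ∧ ∀ y ∈ D, δ y ≠ z}) := by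
  classical
  set a := C.repr (d (C x))
  have hw_flag : d (C x) ∈ A.flag m := by
    simpa using hd.2.2 (m + 1) (mem_map_of_mem (hx ▸ h.isAdaptedBasis.mem_flag_succ x))
  have hw_gr : d (C x) ∈ A.gr (deg x + 1) := hd.1 _ (mem_map_of_mem (h.mem_gr x))
  have ha : ∀ y ∈ D, a y = 0 := fun y hy =>
    h.repr_eq_zero_of_mem_flag hw_flag (by simpa using congr($(hd.2.1) (C x))) hy
  refine ⟨C x - ∑ y ∈ D, a (δ y) • C y, ?_, ?_, ?_⟩
  · refine sub_mem (h.mem_gr x) (sum_mem fun y hy => ?_)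
    by_cases hay : a (δ y) = 0
    · simp [hay]
    · have h1 := (mem_gr_iff h.mem_gr).mp hw_gr _ hay
      have h2 := (h.isPR.2.2 y hy).2
      exact smul_mem _ _ ((show deg y = deg x by omega) ▸ h.mem_gr y)
  · rw [sub_sub_cancel_left, hx]
    exact neg_mem (sum_mem fun y hy =>
      smul_mem _ _ (A.flag_mono (h.lt_of_mem y hy) (h.isAdaptedBasis.mem_flag_succ y)))
  · have hdu : d (C x - ∑ y ∈ D, a (δ y) • C y)
        = d (C x) - ∑ y ∈ D, a (δ y) • C (δ y) := by
      rw [map_sub, map_sum]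
      congr 1
      refine Finset.sum_congr rfl fun y hy => ?_
      rw [map_smul, h.apply_eq y (h.lt_of_mem y hy), if_pos hy]
    rw [hdu, C.mem_span_image]
    intro z hz
    rw [Finset.mem_coe, Finsupp.mem_support_iff, map_sub, Finsupp.sub_apply] at hz
    have hzδ : ∀ y ∈ D, δ y ≠ z := by
      rintro y hy rfl
      exact hz (by rw [C.repr_sum_smul_comp_apply_self h.isPR.injOn _ hy, sub_self])
    rw [C.repr_sum_smul_comp_apply_of_forall_ne _ hzδ, sub_zero] at hz
    exact ⟨h.isAdaptedBasis.mem_flag_iff.mp hw_flag z hz, fun hzD => hz (ha z hzD), hzδ⟩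

theorem exists_update_of_sub_mem (hn : finrank k A.V = n) {x : Fin n} (hx : m ≤ x) {u : A.V}
    (hu : u ∈ A.gr (deg x)) (hux : u - C x ∈ A.flag x) :
    ∃ C', IsPartialNormalForm d deg m C' D δ ∧ ⇑C' = Function.update C x u := by
  obtain ⟨hu₁, hu₂⟩ := h.isAdaptedBasis.mem_flag_succ_notMem_of_sub_mem hux
  refine exists_update hn h.mem_gr h.isAdaptedBasis hu hu₁ hu₂ h.isPR h.lt_of_mem fun z hz => ?_
  have hzx : z ≠ x := fun hzx => by rw [hzx] at hz; omega
  rw [Function.update_of_ne hzx, h.apply_eq z hz]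
  split_ifs with hzD
  · rw [Function.update_of_ne ((h.notMem_of_le hx).2 z hzD)]
  · rfl

theorem succ_of_apply_eq_zero {x : Fin n} (hx : (x : ℕ) = m) (hdx : d (C x) = 0) :
    IsPartialNormalForm d deg (m + 1) C D δ := by
  refine ⟨h.mem_gr, h.isAdaptedBasis, h.isPR, fun z hz => Nat.lt_succ_of_lt (h.lt_of_mem z hz),
    fun z hz => ?_⟩
  rcases Nat.lt_succ_iff_lt_or_eq.mp hz with hz | hz
  · exact h.apply_eq z hz
  · obtain rfl : z = x := Fin.ext (hz.trans hx.symm)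
    rw [hdx, if_neg (h.notMem_of_le hx.ge).1]

theorem exists_succ_of_apply_ne_zero (hn : finrank k A.V = n) (hd : IsDiff A d) {x : Fin n}
    (hx : (x : ℕ) = m) (hdx : d (C x) ≠ 0)
    (hfree : d (C x) ∈ span k (C '' {z | (z : ℕ) < m ∧ z ∉ D ∧ ∀ y ∈ D, δ y ≠ z})) :
    ∃ C' D' δ', IsPartialNormalForm d deg (m + 1) C' D' δ' := by
  obtain ⟨z₀, hz₀, hw₁, hw₂⟩ := h.isAdaptedBasis.exists_repr_ne_zero_mem_flag_succ_notMem hdx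
  obtain ⟨hz₀m, hz₀D, hz₀δ⟩ := C.mem_span_image.mp hfree (Finsupp.mem_support_iff.mpr hz₀)
  have hw_gr : d (C x) ∈ A.gr (deg x + 1) := hd.1 _ (mem_map_of_mem (h.mem_gr x))
  have hdeg : deg z₀ = deg x + 1 := (mem_gr_iff h.mem_gr).mp hw_gr z₀ hz₀
  have hz₀x : z₀ ≠ x := fun hzx => by rw [hzx] at hz₀m; omega
  obtain ⟨hxD, hxδ⟩ := h.notMem_of_le hx.ge
  have hpr := h.isPR.insert hxD hxδ hz₀D hz₀δ (Fin.lt_def.mpr (hx ▸ hz₀m)) hdeg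
  have hlt : ∀ z ∈ insert x D, (z : ℕ) < m + 1 := by
    intro z hz
    rcases Finset.mem_insert.mp hz with rfl | hz
    · omega
    · exact Nat.lt_succ_of_lt (h.lt_of_mem z hz)
  have hdd : d (d (C x)) = 0 := by simpa using congr($(hd.2.1) (C x))
  have happly : ∀ z : Fin n, (z : ℕ) < m + 1 →
      d (Function.update C z₀ (d (C x)) z) = if z ∈ insert x D then
        Function.update C z₀ (d (C x)) (Function.update δ x z₀ z) else 0 := by
    intro z hz
    rcases eq_or_ne z x with rfl | hzx
    · simp [Function.update_of_ne hz₀x.symm]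
    rcases eq_or_ne z z₀ with rfl | hzz₀
    · simp [hdd, hzx, hz₀D]
    have hzm : (z : ℕ) < m := by
      have := Fin.val_ne_of_ne hzx
      omega
    simp only [Function.update_of_ne hzz₀, Function.update_of_ne hzx, h.apply_eq z hzm,
      Finset.mem_insert, hzx, false_or]
    split_ifs with hzD
    · rw [Function.update_of_ne (hz₀δ z hzD)]
    · rfl
  obtain ⟨C', hC', -⟩ :=
    exists_update hn h.mem_gr h.isAdaptedBasis (hdeg ▸ hw_gr) hw₁ hw₂ hpr hlt happly
  exact ⟨C', _, _, hC'⟩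

theorem exists_succ (hn : finrank k A.V = n) (hd : IsDiff A d) (hm : m < n) :
    ∃ C' D' δ', IsPartialNormalForm d deg (m + 1) C' D' δ' := by
  set x : Fin n := ⟨m, hm⟩
  obtain ⟨u, hu, hux, hdu⟩ := h.exists_correction hd (x := x) rfl
  obtain ⟨C', h', hC'⟩ := h.exists_update_of_sub_mem hn (x := x) le_rfl hu hux
  by_cases hdx : d (C' x) = 0
  · exact ⟨C', D, δ, h'.succ_of_apply_eq_zero rfl hdx⟩
  refine h'.exists_succ_of_apply_ne_zero hn hd rfl hdx ?_
  have hfree : C '' {z | (z : ℕ) < m ∧ z ∉ D ∧ ∀ y ∈ D, δ y ≠ z}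
      = C' '' {z | (z : ℕ) < m ∧ z ∉ D ∧ ∀ y ∈ D, δ y ≠ z} :=
    Set.image_congr fun z hz => by rw [hC', Function.update_of_ne (Fin.ne_of_lt hz.1)]
  rwa [hC', Function.update_self, ← hC', ← hfree]

end IsPartialNormalForm

theorem exists_isPartialNormalForm {d : A.V →ₗ[k] A.V} (hd : IsDiff A d)
    {b : Basis (Fin n) k A.V} {deg : Fin n → ℤ} (hb : ∀ z, b z ∈ A.gr (deg z))
    (hba : IsAdaptedBasis A b) : ∀ m ≤ n, ∃ C D δ, IsPartialNormalForm d deg m C D δ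
  | 0, _ => ⟨b, ∅, id, .zero hb hba⟩
  | m + 1, hm =>
    have ⟨_, _, _, h⟩ := exists_isPartialNormalForm hd hb hba m (by omega)
    h.exists_succ (by simp [finrank_eq_card_basis b]) hd hm

theorem exists_isPR_conjDiff_dOf {d : A.V →ₗ[k] A.V} (hd : IsDiff A d)
    {b : Basis (Fin n) k A.V} {deg : Fin n → ℤ} (hb : ∀ z, b z ∈ A.gr (deg z))
    (hba : IsAdaptedBasis A b) : ∃ D δ, IsPR n deg D δ ∧ ConjDiff A (dOf b D δ) d := by
  obtain ⟨C, D, δ, h⟩ := exists_isPartialNormalForm hd hb hba n le_rfl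
  have hC : dOf C D δ = d := C.ext fun z => by rw [dOf_apply, h.apply_eq z z.isLt]
  exact ⟨D, δ, h.isPR, hC ▸ conjDiff_dOf_of_isAdaptedBasis hb hba h.mem_gr h.isAdaptedBasis D δ⟩

end GFS

/-- Let `V` be a flagged graded space of dimension `n` over `k`, with
a homogeneous basis `b` adapted to the flag, whose degrees `degb` give the grading of
the associated graded ordered set `X_V = (Fin n, degb)`.  Then `(D,δ) ↦ d(D,δ)` induces
a bijection between partial rulings of `X_V` and flag-decreasing differentials on `V`
modulo conjugation by grading- and flag-preserving automorphisms; in particular the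
conjugation class of `d(D,δ)` does not depend on the choice of adapted homogeneous
basis. -/
theorem partial_rulings_biject_with_differentials
    (k : Type) [Field k] (A : GFS k) (n : ℕ)
    (b : Module.Basis (Fin n) k A.V) (degb : Fin n → ℤ)
    (hhom : ∀ x, b x ∈ A.gr (degb x))
    (hadapt : ∀ i : ℕ, A.flag i = Submodule.span k (⇑b '' {x : Fin n | (x : ℕ) < i})) :
    -- (1) each `d(D,δ)` is a flag-decreasing differential:
    (∀ D δ, IsPR n degb D δ → IsDiff A (dOf b D δ)) ∧
    -- (2) injectivity: conjugate differentials come from equal partial rulings: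
    (∀ D δ D' δ', IsPR n degb D δ → IsPR n degb D' δ' →
        ConjDiff A (dOf b D δ) (dOf b D' δ') → D = D' ∧ ∀ x ∈ D, δ x = δ' x) ∧
    -- (3) surjectivity: every flag-decreasing differential is conjugate to some
    --     `d(D,δ)`:
    (∀ d : A.V →ₗ[k] A.V, IsDiff A d →
        ∃ D δ, IsPR n degb D δ ∧ ConjDiff A (dOf b D δ) d) ∧
    -- (4) independence of the choice of adapted homogeneous basis:
    (∀ (b' : Module.Basis (Fin n) k A.V) (degb' : Fin n → ℤ),
        (∀ x, b' x ∈ A.gr (degb' x)) →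
        (∀ i : ℕ, A.flag i = Submodule.span k (⇑b' '' {x : Fin n | (x : ℕ) < i})) →
        ∀ D δ, IsPR n degb D δ → ConjDiff A (dOf b D δ) (dOf b' D δ)) :=
  ⟨fun _ _ hpr => dOf_isDiff hhom hadapt hpr,
    fun _ _ _ _ hpr hpr' h => eq_of_conjDiff_dOf hadapt hpr.injOn hpr'.injOn h,
    fun _ hd => exists_isPR_conjDiff_dOf hd hhom hadapt,
    fun _ _ hhom' hadapt' D δ _ => conjDiff_dOf_of_isAdaptedBasis hhom hadapt hhom' hadapt' D δ⟩
end

section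
/- Let X = {1,…,n} be a finite totally ordered ℤ-graded set, (D,δ) a partial ruling of X, and k a field. Let d be the n×n matrix over k with entry 1 at position (δ(k),k) for each k ∈ D and 0 elsewhere, and let A = (a_{ij}) be an upper-triangular n×n matrix over k with a_{ij} = 0 whenever deg(i) ≠ deg(j). Then Ad = dA holds if and only if the following four conditions hold: (1) a_{i,δ(k)} = 0 whenever k ∈ D, i < δ(k), deg(i) = deg(k)+1, and either i ∉ δ(D) or (i ∈ δ(D) and δ⁻¹(i) > k); (2) a_{δ⁻¹(i),k} = 0 whenever i ∈ δ(D), δ⁻¹(i) < k, deg(i) = deg(k)+1, and either k ∉ D or (k ∈ D and i > δ(k)); (3) a_{i,δ(k)} = a_{δ⁻¹(i),k} whenever k ∈ D, i ∈ δ(D), i < δ(k), δ⁻¹(i) < k, and deg(i) = deg(k)+1; (4) a_{δ(k),δ(k)} = a_{kk} for all k ∈ D. -/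
/-!
STATEMENT 6.  Let `X = {1,…,n}` (formalized as `Fin n`) be a finite totally ordered
ℤ-graded set with grading `deg`, and `(D, δ)` a partial ruling of `X` (with `δ` a total
function, constrained only on `D`).  Let `d` be the `n×n` matrix over a field `k` with
entry `1` at position `(δ j, j)` for `j ∈ D` and `0` elsewhere, and `A` an
upper-triangular matrix with `A i j = 0` whenever `deg i ≠ deg j`.  Then `A * d = d * A`
iff the four listed conditions hold.
-/

theorem matrix_commutes_with_ruling_differential_iff
    (n : ℕ) (deg : Fin n → ℤ) (k : Type) [Field k]
    -- `(D, δ)` is a partial ruling of the graded ordered set `(Fin n, deg)`: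
    (D : Finset (Fin n)) (δ : Fin n → Fin n)
    (hmaps : ∀ x ∈ D, δ x ∉ D)
    (hinj : ∀ x ∈ D, ∀ y ∈ D, δ x = δ y → x = y)
    (hlt : ∀ x ∈ D, δ x < x)
    (hdeg : ∀ x ∈ D, deg (δ x) = deg x + 1)
    -- the matrix `d` of the differential `d(D,δ)`:
    (d : Matrix (Fin n) (Fin n) k)
    (hd : ∀ i j, d i j = if j ∈ D ∧ δ j = i then 1 else 0)
    -- `A` upper triangular with `A i j = 0` unless `deg i = deg j`:
    (A : Matrix (Fin n) (Fin n) k)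
    (hupper : ∀ i j, j < i → A i j = 0)
    (hgraded : ∀ i j, deg i ≠ deg j → A i j = 0) :
    A * d = d * A ↔
      -- (1) `a_{i, δ(p)} = 0` for `p ∈ D`, `i < δ p`, `deg i = deg p + 1`, and
      --     `i ∉ δ(D)` or (`i ∈ δ(D)` and `δ⁻¹(i) > p`):
      ((∀ (p : Fin n) (i : Fin n), p ∈ D → i < δ p → deg i = deg p + 1 →
          ((∀ x ∈ D, δ x ≠ i) ∨ (∃ x ∈ D, δ x = i ∧ p < x)) → A i (δ p) = 0) ∧
       -- (2) `a_{δ⁻¹(i), p} = 0` for `i = δ x ∈ δ(D)`, `x = δ⁻¹(i) < p`,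
       --     `deg i = deg p + 1`, and `p ∉ D` or (`p ∈ D` and `i > δ p`):
       (∀ (x : Fin n) (p : Fin n), x ∈ D → x < p → deg (δ x) = deg p + 1 →
          (p ∉ D ∨ (p ∈ D ∧ δ p < δ x)) → A x p = 0) ∧
       -- (3) `a_{i, δ(p)} = a_{δ⁻¹(i), p}` for `p ∈ D`, `i = δ x ∈ δ(D)`, `i < δ p`,
       --     `δ⁻¹(i) < p`, `deg i = deg p + 1`:
       (∀ (x : Fin n) (p : Fin n), p ∈ D → x ∈ D → δ x < δ p → x < p →
          deg (δ x) = deg p + 1 → A (δ x) (δ p) = A x p) ∧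
       -- (4) `a_{δ(p), δ(p)} = a_{p,p}` for `p ∈ D`:
       (∀ p ∈ D, A (δ p) (δ p) = A p p)) := by
  have hAd : ∀ i j, (A * d) i j = if j ∈ D then A i (δ j) else 0 := by
    intro i j
    rw [Matrix.mul_apply]
    by_cases hj : j ∈ D
    · simp only [hd, hj, true_and, mul_ite, mul_one, mul_zero, if_pos hj]
      rw [Finset.sum_ite_eq Finset.univ (δ j) (fun l => A i l)]
      simp
    · simp [hd, hj]
  have hdA : ∀ i j x, x ∈ D → δ x = i → (d * A) i j = A x j := by
    intro i j x hx hδx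
    rw [Matrix.mul_apply, Finset.sum_eq_single x]
    · simp [hd, hx, hδx]
    · intro b _ hb
      rw [hd]
      by_cases hbD : b ∈ D ∧ δ b = i
      · exact absurd (hinj b hbD.1 x hx (hbD.2.trans hδx.symm)) hb
      · simp [hbD]
    · intro h; exact absurd (Finset.mem_univ x) h
  have hdA0 : ∀ i j, (∀ x ∈ D, δ x ≠ i) → (d * A) i j = 0 := by
    intro i j h
    rw [Matrix.mul_apply]
    apply Finset.sum_eq_zero
    intro b _
    rw [hd]
    by_cases hb : b ∈ D ∧ δ b = i
    · exact absurd hb.2 (h b hb.1)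
    · simp [hb]
  constructor
  · intro hcomm
    have heq : ∀ i j, (A * d) i j = (d * A) i j := fun i j => by rw [hcomm]
    refine ⟨?_, ?_, ?_, ?_⟩
    · intro p i hp hip hdegi hcase
      have h1 := heq i p
      rw [hAd, if_pos hp] at h1
      rcases hcase with h | ⟨x, hx, hδx, hpx⟩
      · rw [hdA0 i p h] at h1; exact h1
      · rw [hdA i p x hx hδx] at h1
        rw [h1]; exact hupper x p hpx
    · intro x p hx hxp hdegx hcase
      have h1 := heq (δ x) p
      rw [hAd, hdA (δ x) p x hx rfl] at h1
      rcases hcase with hpD | ⟨hpD, hδ⟩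
      · rw [if_neg hpD] at h1; exact h1.symm
      · rw [if_pos hpD] at h1; rw [← h1]; exact hupper (δ x) (δ p) hδ
    · intro x p hpD hxD hδlt hxp hdg
      have h1 := heq (δ x) p
      rw [hAd, if_pos hpD, hdA (δ x) p x hxD rfl] at h1
      exact h1
    · intro p hp
      have h1 := heq (δ p) p
      rw [hAd, if_pos hp, hdA (δ p) p p hp rfl] at h1
      exact h1
  · rintro ⟨c1, c2, c3, c4⟩
    ext i j
    rw [hAd]
    by_cases hj : j ∈ D
    · rw [if_pos hj]
      by_cases hi : ∃ x ∈ D, δ x = i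
      · obtain ⟨x, hx, hδx⟩ := hi
        rw [hdA i j x hx hδx]
        subst hδx
        rcases lt_trichotomy x j with hxj | hxj | hxj
        · by_cases hdg : deg (δ x) = deg j + 1
          · rcases lt_trichotomy (δ x) (δ j) with hδlt | hδeq | hδgt
            · exact c3 x j hj hx hδlt hxj hdg
            · exact absurd (hinj x hx j hj hδeq) hxj.ne
            · rw [hupper _ _ hδgt, c2 x j hx hxj hdg (Or.inr ⟨hj, hδgt⟩)]
          · rw [hgraded _ _ (by rw [hdeg j hj]; exact hdg),
              hgraded x j (fun hc => hdg (by rw [hdeg x hx, hc]))]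
        · subst hxj
          exact c4 x hx
        · rw [hupper x j hxj]
          rcases lt_trichotomy (δ x) (δ j) with hδlt | hδeq | hδgt
          · by_cases hdg : deg (δ x) = deg j + 1
            · exact c1 j (δ x) hj hδlt hdg (Or.inr ⟨x, hx, rfl, hxj⟩)
            · exact hgraded _ _ (by rw [hdeg j hj]; exact hdg)
          · exact absurd (hinj x hx j hj hδeq) hxj.ne'
          · exact hupper _ _ hδgt
      · push_neg at hi
        rw [hdA0 i j hi]
        rcases lt_trichotomy i (δ j) with hlt' | heq' | hgt'
        · by_cases hdg : deg i = deg j + 1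
          · exact c1 j i hj hlt' hdg (Or.inl hi)
          · exact hgraded _ _ (by rw [hdeg j hj]; exact hdg)
        · exact absurd heq'.symm (hi j hj)
        · exact hupper _ _ hgt'
    · rw [if_neg hj]
      by_cases hi : ∃ x ∈ D, δ x = i
      · obtain ⟨x, hx, hδx⟩ := hi
        rw [hdA i j x hx hδx]
        rcases lt_trichotomy x j with hxj | hxj | hxj
        · by_cases hdg : deg (δ x) = deg j + 1
          · exact (c2 x j hx hxj hdg (Or.inl hj)).symm
          · exact (hgraded x j (fun hc => hdg (by rw [hdeg x hx, hc]))).symm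
        · exact absurd (hxj ▸ hx) hj
        · exact (hupper x j hxj).symm
      · push_neg at hi
        rw [hdA0 i j hi]
end

section
/- Let X be a nonempty finite totally ordered ℤ-graded set, y the smallest element of X, and J = {x ∈ X : deg(x) = deg(y) − 1}. Then the map sending a ruling (D,δ) of X to the pair (x, (D∖{x}, δ restricted to D∖{x})), where x = δ⁻¹(y), is a well-defined bijection from the set of rulings of X onto the disjoint union over x ∈ J of the sets of rulings of X∖{x,y}. -/
/-!
STATEMENT 9.  Let `X` be a nonempty finite totally ordered ℤ-graded set (formalized as a
nonempty `X : Finset ℕ` with a grading `deg : ℕ → ℤ`), `y` the smallest element of `X`,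
and `J = {x ∈ X : deg x = deg y − 1}`.  A ruling of a finite set `S` is a pair `(D, δ)`
with `D ⊆ S` and `δ` (a total function, constrained only on `D`) inducing a bijection
`D → S∖D` with `δ x < x` and `deg (δ x) = deg x + 1` for `x ∈ D`.

The map sending a ruling `(D, δ)` of `X` to `(x, (D∖{x}, δ|_{D∖{x}}))` with `x = δ⁻¹(y)`
is a well-defined bijection from rulings of `X` onto the disjoint union over `x ∈ J` of
the rulings of `X∖{x,y}`.  This is formalized, quotient-free, as the conjunction of:
well-definedness (existence and uniqueness of `x = δ⁻¹(y)`, membership `x ∈ J`, and the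
restriction being a ruling of `X∖{x,y}`), surjectivity (every `x ∈ J` and every ruling
of `X∖{x,y}` extends to a ruling of `X`), and injectivity (a ruling of `X` is determined
by its image).
-/

/-- `(D, δ)` is a ruling of the graded ordered set `(S, deg)`. -/
def IsRulingPair (S : Finset ℕ) (deg : ℕ → ℤ) (D : Finset ℕ) (δ : ℕ → ℕ) : Prop :=
  D ⊆ S ∧ (∀ x ∈ D, δ x ∈ S ∧ δ x ∉ D) ∧
    (∀ x ∈ D, ∀ x' ∈ D, δ x = δ x' → x = x') ∧
    (∀ z ∈ S, z ∉ D → ∃ x ∈ D, δ x = z) ∧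
    (∀ x ∈ D, δ x < x ∧ deg (δ x) = deg x + 1)

theorem ruling_restriction_bijection
    (X : Finset ℕ) (hX : X.Nonempty) (deg : ℕ → ℤ) :
    -- notation: `y` is the minimum of `X`
    ∀ y, y = X.min' hX →
      -- (a) well-definedness: for any ruling `(D, δ)` of `X` there is a unique
      -- `x = δ⁻¹(y)`; it lies in `J`, and `(D∖{x}, δ)` is a ruling of `X∖{x,y}`.
      ((∀ D δ, IsRulingPair X deg D δ →
          ∃ x ∈ D, δ x = y ∧ (∀ x' ∈ D, δ x' = y → x' = x) ∧
            deg x = deg y - 1 ∧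
            IsRulingPair ((X.erase x).erase y) deg (D.erase x) δ) ∧
      -- (b) surjectivity: any `x ∈ J` and ruling of `X∖{x,y}` arise this way.
      (∀ x ∈ X, deg x = deg y - 1 →
          ∀ D' δ', IsRulingPair ((X.erase x).erase y) deg D' δ' →
            IsRulingPair X deg (insert x D') (Function.update δ' x y)) ∧
      -- (c) injectivity: a ruling of `X` is determined by `(x, (D∖{x}, δ|_{D∖{x}}))`.
      (∀ D δ D' δ', IsRulingPair X deg D δ → IsRulingPair X deg D' δ' →
          ∀ x ∈ D, ∀ x' ∈ D', δ x = y → δ' x' = y → x = x' →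
            D.erase x = D'.erase x' → (∀ z ∈ D.erase x, δ z = δ' z) →
            D = D' ∧ ∀ z ∈ D, δ z = δ' z)) := by
  intro y hy
  have hyX : y ∈ X := hy ▸ X.min'_mem hX
  have hymin : ∀ z ∈ X, y ≤ z := fun z hz => hy ▸ X.min'_le z hz
  refine ⟨?_, ?_, ?_⟩
  · -- (a)
    intro D δ hR
    obtain ⟨hDS, hmap, hinj, hsurj, hord⟩ := hR
    have hyD : y ∉ D := by
      intro h
      exact absurd (hymin _ (hmap y h).1) (not_le.mpr (hord y h).1)
    obtain ⟨x, hxD, hxy⟩ := hsurj y hyX hyD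
    have hxX := hDS hxD
    have hdegx : deg x = deg y - 1 := by
      have := (hord x hxD).2
      rw [hxy] at this; omega
    refine ⟨x, hxD, hxy, fun x' hx' h => hinj x' hx' x hxD (h.trans hxy.symm),
      hdegx, ?_, ?_, ?_, ?_, ?_⟩
    · intro z hz
      rw [Finset.mem_erase] at hz
      rw [Finset.mem_erase, Finset.mem_erase]
      exact ⟨fun h => hyD (h ▸ hz.2), hz.1, hDS hz.2⟩
    · intro z hz
      rw [Finset.mem_erase] at hz
      obtain ⟨hzx, hzD⟩ := hz
      refine ⟨?_, ?_⟩
      · rw [Finset.mem_erase, Finset.mem_erase]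
        refine ⟨fun h => hzx (hinj z hzD x hxD (h.trans hxy.symm)), ?_, (hmap z hzD).1⟩
        intro h
        exact (hmap z hzD).2 (h ▸ hxD)
      · intro h
        exact (hmap z hzD).2 (Finset.mem_of_mem_erase h)
    · intro a ha b hb h
      exact hinj a (Finset.mem_of_mem_erase ha) b (Finset.mem_of_mem_erase hb) h
    · intro w hw hw'
      rw [Finset.mem_erase, Finset.mem_erase] at hw
      obtain ⟨hwy, hwx, hwX⟩ := hw
      have hwD : w ∉ D := fun h => hw' (Finset.mem_erase.mpr ⟨hwx, h⟩)
      obtain ⟨z, hzD, hzw⟩ := hsurj w hwX hwD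
      have hzx : z ≠ x := fun h => hwy (by rw [← hzw, h, hxy])
      exact ⟨z, Finset.mem_erase.mpr ⟨hzx, hzD⟩, hzw⟩
    · intro z hz
      exact hord z (Finset.mem_of_mem_erase hz)
  · -- (b)
    intro x hxX hdegx D' δ' hR
    obtain ⟨hDS, hmap, hinj, hsurj, hord⟩ := hR
    have hxy : x ≠ y := by intro h; rw [h] at hdegx; omega
    have hylt : y < x := lt_of_le_of_ne (hymin x hxX) (Ne.symm hxy)
    have hmemD' : ∀ z ∈ D', z ≠ x ∧ z ≠ y := by
      intro z hz
      have := hDS hz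
      rw [Finset.mem_erase, Finset.mem_erase] at this
      exact ⟨this.2.1, this.1⟩
    have hmemD'X : ∀ z ∈ D', z ∈ X := fun z hz =>
      Finset.mem_of_mem_erase (Finset.mem_of_mem_erase (hDS hz))
    have hxD' : x ∉ D' := fun h => (hmemD' x h).1 rfl
    have hmapval : ∀ z ∈ D', δ' z ≠ x ∧ δ' z ≠ y ∧ δ' z ∈ X := by
      intro z hz
      have := (hmap z hz).1
      rw [Finset.mem_erase, Finset.mem_erase] at this
      exact ⟨this.2.1, this.1, this.2.2⟩
    refine ⟨?_, ?_, ?_, ?_, ?_⟩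
    · intro z hz
      rcases Finset.mem_insert.mp hz with h | h
      · exact h ▸ hxX
      · exact hmemD'X z h
    · intro z hz
      rcases Finset.mem_insert.mp hz with h | h
      · subst h
        rw [Function.update_self]
        refine ⟨hyX, ?_⟩
        intro h
        rcases Finset.mem_insert.mp h with h | h
        · exact hxy h.symm
        · exact (hmemD' y h).2 rfl
      · rw [Function.update_of_ne (hmemD' z h).1]
        refine ⟨(hmapval z h).2.2, ?_⟩
        intro hc
        rcases Finset.mem_insert.mp hc with hc | hc
        · exact (hmapval z h).1 hc
        · exact (hmap z h).2 hc
    · intro a ha b hb hab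
      rcases Finset.mem_insert.mp ha with ha' | ha' <;>
        rcases Finset.mem_insert.mp hb with hb' | hb'
      · exact ha'.trans hb'.symm
      · subst ha'
        rw [Function.update_self, Function.update_of_ne (hmemD' b hb').1] at hab
        exact absurd hab.symm (hmapval b hb').2.1
      · subst hb'
        rw [Function.update_self, Function.update_of_ne (hmemD' a ha').1] at hab
        exact absurd hab (hmapval a ha').2.1
      · rw [Function.update_of_ne (hmemD' a ha').1,
          Function.update_of_ne (hmemD' b hb').1] at hab
        exact hinj a ha' b hb' hab
    · intro w hwX hw
      have hwx : w ≠ x := fun h => hw (h ▸ Finset.mem_insert_self x D')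
      by_cases hwy : w = y
      · exact ⟨x, Finset.mem_insert_self x D', by rw [Function.update_self, hwy]⟩
      · have hwD' : w ∉ D' := fun h => hw (Finset.mem_insert_of_mem h)
        obtain ⟨z, hzD', hzw⟩ := hsurj w
          (Finset.mem_erase.mpr ⟨hwy, Finset.mem_erase.mpr ⟨hwx, hwX⟩⟩) hwD'
        exact ⟨z, Finset.mem_insert_of_mem hzD',
          by rw [Function.update_of_ne (hmemD' z hzD').1]; exact hzw⟩
    · intro z hz
      rcases Finset.mem_insert.mp hz with h | h
      · subst h
        rw [Function.update_self]
        exact ⟨hylt, by omega⟩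
      · rw [Function.update_of_ne (hmemD' z h).1]
        exact hord z h
  · -- (c)
    intro D δ D' δ' _ _ x hxD x' hx'D' hδx hδ'x' hxx' herase hrest
    subst hxx'
    have hDD' : D = D' := by
      rw [← Finset.insert_erase hxD, ← Finset.insert_erase hx'D', herase]
    refine ⟨hDD', ?_⟩
    intro z hz
    by_cases hzx : z = x
    · subst hzx
      rw [hδx, hδ'x']
    · exact hrest z (Finset.mem_erase.mpr ⟨hzx, hz⟩)
end
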